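/- Let n ≥ 1 and let g_1,…,g_n be real constants. Define Q : ℝ^n × ℝ^n → ℝ by Q(z,x) = exp( Σ_{i=1}^{n−1} ( e^{x_i − z_i} + g_i e^{z_{i+1} − x_i} ) + e^{x_n − z_n} + g_n e^{−x_n − z_n} ). Then for all z, x ∈ ℝ^n: −(1/2) Σ_{i=1}^{n} ∂²Q/∂z_i² + [ Σ_{i=1}^{n−1} g_i e^{z_{i+1} − z_i} + 2 g_n e^{−2 z_n} ] Q = −(1/2) Σ_{i=1}^{n} ∂²Q/∂x_i² + [ Σ_{i=1}^{n−1} g_i e^{x_{i+1} − x_i} + g_{n−1} g_n e^{−x_n − x_{n−1}} ] Q (for n = 1 the term g_{n−1} g_n e^{−x_n − x_{n−1}} is absent). That is, Q intertwines the quadratic Hamiltonians of the C_n and D_n open Toda chains. -/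

import Mathlib

/-!
Write `Q = exp S`, where `S` is the sum of the monomials `A_i = e^{x_i - z_i}`,
`B_i = g_i e^{z_{i+1} - x_i}` and `C = g_n e^{-x_n - z_n}`. Each monomial is a constant times
`e` to a linear form with coefficients in `{0, ±1}`, so `∂²Q/∂y² = ((∂S/∂y)² + ∂²S/∂y²) Q`
and `∂²S/∂y²` is the sum of the monomials containing `y`. Summed over all coordinates, these second derivatives give
`ΣA + ΣB + C` on both sides, and in the squared gradients the squares of the monomials cancel.
What survives are cross terms: `A_i B_i = g_i e^{z_{i+1} - z_i}` and `A_n C = g_n e^{-2 z_n}`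
in `z`, `A_{i+1} B_i = g_i e^{x_{i+1} - x_i}` and `B_{n-1} C` in `x`, i.e. the two potentials.
-/

open Real

/-- Second partial derivative of `f` in the `i`-th coordinate at `x`. -/
noncomputable def pd2 {k : ℕ} (f : (Fin k → ℝ) → ℝ) (i : Fin k) (x : Fin k → ℝ) : ℝ :=
  deriv (deriv (fun t : ℝ => f (Function.update x i t))) (x i)

/-- The elementary kernel intertwining the `C_n` and `D_n` open Toda
chains (`n = m + 1 ≥ 1`):
`Q(z,x) = exp( Σ_{i=1}^{n−1} ( e^{x_i − z_i} + g_i e^{z_{i+1} − x_i} ) + e^{x_n − z_n} + g_n e^{−x_n − z_n} )`. -/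
noncomputable def Qker (m : ℕ) (g z x : Fin (m + 1) → ℝ) : ℝ :=
  Real.exp ((∑ i : Fin m, (Real.exp (x i.castSucc - z i.castSucc)
        + g i.castSucc * Real.exp (z i.succ - x i.castSucc)))
    + Real.exp (x (Fin.last m) - z (Fin.last m))
    + g (Fin.last m) * Real.exp (-x (Fin.last m) - z (Fin.last m)))

open Function

theorem deriv_deriv_exp_comp {φ φ' φ'' : ℝ → ℝ} (hφ : ∀ t, HasDerivAt φ (φ' t) t)
    (hφ' : ∀ t, HasDerivAt φ' (φ'' t) t) (s : ℝ) :
    deriv (deriv fun t => exp (φ t)) s = (φ' s ^ 2 + φ'' s) * exp (φ s) := by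
  have h : deriv (fun t => exp (φ t)) = fun t => exp (φ t) * φ' t :=
    funext fun t => (hφ t).exp.deriv
  rw [h, ((hφ s).exp.fun_mul (hφ' s)).deriv]
  ring

theorem pd2_exp_comp {k : ℕ} {F G H : (Fin k → ℝ) → ℝ} {i : Fin k} {z : Fin k → ℝ}
    (hF : ∀ t, HasDerivAt (fun s => F (update z i s)) (G (update z i t)) t)
    (hG : ∀ t, HasDerivAt (fun s => G (update z i s)) (H (update z i t)) t) :
    pd2 (fun w => exp (F w)) i z = (G z ^ 2 + H z) * exp (F z) := by
  simpa [pd2] using deriv_deriv_exp_comp hF hG (z i)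

theorem hasDerivAt_update_apply {k : ℕ} (z : Fin k → ℝ) (i p : Fin k) (t : ℝ) :
    HasDerivAt (fun s => update z i s p) ((Pi.single i 1 : Fin k → ℝ) p) t :=
  hasDerivAt_pi.1 (hasDerivAt_update z i t) p

section PiSingle

variable {ι R : Type*} [DecidableEq ι] [CommRing R]

theorem Fintype.sum_single_mul [Fintype ι] (k : ι) (c : R) (f : ι → R) :
    ∑ i, (Pi.single k c : ι → R) i * f i = c * f k := by
  simp [Pi.single_apply]

theorem Pi.single_one_apply_mul_self (i p : ι) :
    (Pi.single i 1 : ι → R) p * (Pi.single i 1 : ι → R) p = (Pi.single i 1 : ι → R) p := by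
  by_cases h : p = i <;> simp [h]

theorem Pi.single_one_apply_mul (i p : ι) (c : R) :
    (Pi.single i 1 : ι → R) p * c = (Pi.single p c : ι → R) i := by
  simp [Pi.single_apply, eq_comm]

end PiSingle

namespace Fin

variable {m : ℕ}

theorem sum_cons_zero {α M : Type*} [Zero α] [AddCommMonoid M] (f : Fin (m + 1) → α → M)
    (hf : ∀ i, f i 0 = 0) (b : Fin m → α) :
    ∑ i, f i ((cons 0 b : Fin (m + 1) → α) i) = ∑ j, f j.succ (b j) := by
  simp [sum_univ_succ, hf]

theorem sum_snoc_zero {α M : Type*} [Zero α] [AddCommMonoid M] (f : Fin (m + 1) → α → M)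
    (hf : ∀ i, f i 0 = 0) (b : Fin m → α) :
    ∑ i, f i ((snoc b 0 : Fin (m + 1) → α) i) = ∑ j, f j.castSucc (b j) := by
  simp [sum_univ_castSucc, hf]

variable {R : Type*} [CommRing R]

theorem sum_single_succ_mul (i : Fin (m + 1)) (b : Fin m → R) :
    ∑ j, (Pi.single i 1 : Fin (m + 1) → R) j.succ * b j = (cons 0 b : Fin (m + 1) → R) i := by
  cases i using Fin.cases with
  | zero => simp [succ_ne_zero]
  | succ k => simp [Pi.single_apply]

theorem sum_single_castSucc_mul (i : Fin (m + 1)) (b : Fin m → R) :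
    ∑ j, (Pi.single i 1 : Fin (m + 1) → R) j.castSucc * b j = (snoc b 0 : Fin (m + 1) → R) i := by
  cases i using Fin.lastCases with
  | last => simp [castSucc_ne_last]
  | cast k => simp [Pi.single_apply]

/-- For `a, b, c` the monomials `A, B, C`, the two sums are `ΔQ / Q` in `z` and in `x`
(`cons 0 b` is `i ↦ B_{i-1}` and `snoc b 0` is `i ↦ B_i`). -/
theorem sum_sq_add_cons_sub_sum_sq_add_snoc (a : Fin (m + 1) → R) (b : Fin m → R) (c : R) :
    ∑ i, (((cons 0 b : Fin (m + 1) → R) i - a i - (Pi.single (last m) c : Fin (m + 1) → R) i) ^ 2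
        + (a i + (cons 0 b : Fin (m + 1) → R) i + (Pi.single (last m) c : Fin (m + 1) → R) i))
      - ∑ i, ((a i - (snoc b 0 : Fin (m + 1) → R) i
          - (Pi.single (last m) c : Fin (m + 1) → R) i) ^ 2
        + (a i + (snoc b 0 : Fin (m + 1) → R) i + (Pi.single (last m) c : Fin (m + 1) → R) i))
    = 2 * (∑ j, a j.castSucc * b j + 2 * a (last m) * c
        - (∑ j, a j.succ * b j + (cons 0 b : Fin (m + 1) → R) (last m) * c)) := by
  have hpt : ∀ y u v w : R, ((u - y - w) ^ 2 + (y + u + w)) - ((y - v - w) ^ 2 + (y + v + w))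
      = (u ^ 2 + u) - (v ^ 2 + v) + 2 * (y * v) - 2 * (y * u) + 2 * (w * (2 * y - u - v)) :=
    fun _ _ _ _ => by ring
  rw [← Finset.sum_sub_distrib]
  simp only [hpt, Finset.sum_add_distrib, Finset.sum_sub_distrib, ← Finset.mul_sum]
  rw [sum_cons_zero (fun _ y => y ^ 2) (by simp),
    sum_snoc_zero (fun _ y => y ^ 2) (by simp), sum_cons_zero (fun _ y => y) (by simp),
    sum_snoc_zero (fun _ y => y) (by simp), sum_cons_zero (fun i y => a i * y) (by simp),
    sum_snoc_zero (fun i y => a i * y) (by simp), Fintype.sum_single_mul, snoc_last]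
  ring

end Fin

namespace Qker

variable (m : ℕ) (g : Fin (m + 1) → ℝ)

noncomputable def monoA (z x : Fin (m + 1) → ℝ) (p : Fin (m + 1)) : ℝ := exp (x p - z p)

noncomputable def monoB (z x : Fin (m + 1) → ℝ) (j : Fin m) : ℝ :=
  g j.castSucc * exp (z j.succ - x j.castSucc)

noncomputable def monoC (z x : Fin (m + 1) → ℝ) : ℝ :=
  g (Fin.last m) * exp (-x (Fin.last m) - z (Fin.last m))

/-- Weighted sums of the monomials are closed under partial differentiation in any coordinate,
so the first and second partial derivatives of the exponent of `Qker` are again of this form. -/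
noncomputable def monoSum (α : Fin (m + 1) → ℝ) (β : Fin m → ℝ) (γ : ℝ)
    (z x : Fin (m + 1) → ℝ) : ℝ :=
  ∑ p, α p * monoA m z x p + ∑ j, β j * monoB m g z x j + γ * monoC m g z x

theorem eq_exp_monoSum (z x : Fin (m + 1) → ℝ) :
    Qker m g z x = exp (monoSum m g 1 1 1 z x) := by
  simp only [Qker, monoSum, monoA, monoB, monoC, Pi.one_apply, one_mul, Fin.sum_univ_castSucc,
    Finset.sum_add_distrib]
  ring_nf

variable {m g} (α : Fin (m + 1) → ℝ) (β : Fin m → ℝ) (γ : ℝ) (z x : Fin (m + 1) → ℝ)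
  (i : Fin (m + 1)) (t : ℝ)

theorem hasDerivAt_monoSum_update_left :
    HasDerivAt (fun s => monoSum m g α β γ (update z i s) x)
      (monoSum m g (-(Pi.single i 1 * α)) ((Pi.single i 1 ∘ Fin.succ) * β)
        (-((Pi.single i 1 : Fin (m + 1) → ℝ) (Fin.last m) * γ)) (update z i t) x) t := by
  have hA : ∀ p, HasDerivAt (fun s => α p * monoA m (update z i s) x p)
      ((-(Pi.single i 1 * α) : Fin (m + 1) → ℝ) p * monoA m (update z i t) x p) t := fun p =>
    (((hasDerivAt_update_apply z i p t).const_sub (x p)).exp.const_mul (α p)).congr_deriv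
      (by simp only [monoA, Pi.neg_apply, Pi.mul_apply]; ring)
  have hB : ∀ j, HasDerivAt (fun s => β j * monoB m g (update z i s) x j)
      (((Pi.single i 1 ∘ Fin.succ) * β : Fin m → ℝ) j * monoB m g (update z i t) x j) t :=
    fun j => ((((hasDerivAt_update_apply z i j.succ t).sub_const (x j.castSucc)).exp.const_mul
      (g j.castSucc)).const_mul (β j)).congr_deriv
      (by simp only [monoB, Pi.mul_apply, comp_apply]; ring)
  have hC : HasDerivAt (fun s => γ * monoC m g (update z i s) x)
      (-((Pi.single i 1 : Fin (m + 1) → ℝ) (Fin.last m) * γ) * monoC m g (update z i t) x) t :=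
    ((((hasDerivAt_update_apply z i (Fin.last m) t).const_sub (-x (Fin.last m))).exp.const_mul
      (g (Fin.last m))).const_mul γ).congr_deriv (by simp only [monoC]; ring)
  exact ((HasDerivAt.fun_sum fun p _ => hA p).add (HasDerivAt.fun_sum fun j _ => hB j)).add hC

theorem hasDerivAt_monoSum_update_right :
    HasDerivAt (fun s => monoSum m g α β γ z (update x i s))
      (monoSum m g (Pi.single i 1 * α) (-((Pi.single i 1 ∘ Fin.castSucc) * β))
        (-((Pi.single i 1 : Fin (m + 1) → ℝ) (Fin.last m) * γ)) z (update x i t)) t := by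
  have hA : ∀ p, HasDerivAt (fun s => α p * monoA m z (update x i s) p)
      ((Pi.single i 1 * α : Fin (m + 1) → ℝ) p * monoA m z (update x i t) p) t := fun p =>
    (((hasDerivAt_update_apply x i p t).sub_const (z p)).exp.const_mul (α p)).congr_deriv
      (by simp only [monoA, Pi.mul_apply]; ring)
  have hB : ∀ j, HasDerivAt (fun s => β j * monoB m g z (update x i s) j)
      ((-((Pi.single i 1 ∘ Fin.castSucc) * β) : Fin m → ℝ) j * monoB m g z (update x i t) j) t :=
    fun j => ((((hasDerivAt_update_apply x i j.castSucc t).const_sub (z j.succ)).exp.const_mul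
      (g j.castSucc)).const_mul (β j)).congr_deriv
      (by simp only [monoB, Pi.neg_apply, Pi.mul_apply, comp_apply]; ring)
  have hC : HasDerivAt (fun s => γ * monoC m g z (update x i s))
      (-((Pi.single i 1 : Fin (m + 1) → ℝ) (Fin.last m) * γ) * monoC m g z (update x i t)) t :=
    ((((hasDerivAt_update_apply x i (Fin.last m) t).fun_neg.sub_const
      (z (Fin.last m))).exp.const_mul (g (Fin.last m))).const_mul γ).congr_deriv
      (by simp only [monoC]; ring)
  exact ((HasDerivAt.fun_sum fun p _ => hA p).add (HasDerivAt.fun_sum fun j _ => hB j)).add hC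

theorem pd2_left_eq :
    pd2 (fun u => Qker m g u x) i z
      = (((Fin.cons 0 (monoB m g z x) : Fin (m + 1) → ℝ) i - monoA m z x i
            - (Pi.single (Fin.last m) (monoC m g z x) : Fin (m + 1) → ℝ) i) ^ 2
          + (monoA m z x i + (Fin.cons 0 (monoB m g z x) : Fin (m + 1) → ℝ) i
            + (Pi.single (Fin.last m) (monoC m g z x) : Fin (m + 1) → ℝ) i)) * Qker m g z x := by
  simp_rw [eq_exp_monoSum]
  rw [pd2_exp_comp (F := fun w => monoSum m g _ _ _ w x) (G := fun w => monoSum m g _ _ _ w x)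
    (H := fun w => monoSum m g _ _ _ w x) (fun t => hasDerivAt_monoSum_update_left _ _ _ z x i t)
    (fun t => hasDerivAt_monoSum_update_left _ _ _ z x i t)]
  simp only [monoSum, Pi.mul_apply, Pi.neg_apply, Pi.one_apply, comp_apply, mul_one, neg_mul,
    mul_neg, neg_neg, Finset.sum_neg_distrib, Pi.single_one_apply_mul_self,
    Fintype.sum_single_mul, one_mul]
  rw [Fin.sum_single_succ_mul, Pi.single_one_apply_mul]
  ring

theorem pd2_right_eq :
    pd2 (fun v => Qker m g z v) i x
      = ((monoA m z x i - (Fin.snoc (monoB m g z x) 0 : Fin (m + 1) → ℝ) i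
            - (Pi.single (Fin.last m) (monoC m g z x) : Fin (m + 1) → ℝ) i) ^ 2
          + (monoA m z x i + (Fin.snoc (monoB m g z x) 0 : Fin (m + 1) → ℝ) i
            + (Pi.single (Fin.last m) (monoC m g z x) : Fin (m + 1) → ℝ) i)) * Qker m g z x := by
  simp_rw [eq_exp_monoSum]
  rw [pd2_exp_comp (F := fun w => monoSum m g _ _ _ z w) (G := fun w => monoSum m g _ _ _ z w)
    (H := fun w => monoSum m g _ _ _ z w) (fun t => hasDerivAt_monoSum_update_right _ _ _ z x i t)
    (fun t => hasDerivAt_monoSum_update_right _ _ _ z x i t)]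
  simp only [monoSum, Pi.mul_apply, Pi.neg_apply, Pi.one_apply, comp_apply, mul_one, neg_mul,
    mul_neg, neg_neg, Finset.sum_neg_distrib, Pi.single_one_apply_mul_self,
    Fintype.sum_single_mul, one_mul]
  rw [Fin.sum_single_castSucc_mul, Pi.single_one_apply_mul]
  ring

theorem monoA_castSucc_mul_monoB (j : Fin m) :
    monoA m z x j.castSucc * monoB m g z x j = g j.castSucc * exp (z j.succ - z j.castSucc) := by
  rw [monoA, monoB, mul_left_comm, ← exp_add]
  ring_nf

theorem monoA_succ_mul_monoB (j : Fin m) :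
    monoA m z x j.succ * monoB m g z x j = g j.castSucc * exp (x j.succ - x j.castSucc) := by
  rw [monoA, monoB, mul_left_comm, ← exp_add]
  ring_nf

theorem monoA_last_mul_monoC :
    monoA m z x (Fin.last m) * monoC m g z x = g (Fin.last m) * exp (-(2 * z (Fin.last m))) := by
  rw [monoA, monoC, mul_left_comm, ← exp_add]
  ring_nf

theorem monoB_mul_monoC {j : Fin m} (hj : j.succ = Fin.last m) :
    monoB m g z x j * monoC m g z x
      = g j.castSucc * g (Fin.last m) * exp (-x (Fin.last m) - x j.castSucc) := by
  rw [monoB, monoC, hj, mul_mul_mul_comm, ← exp_add]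
  ring_nf

theorem C_potential_eq :
    (∑ j : Fin m, g j.castSucc * exp (z j.succ - z j.castSucc))
        + 2 * g (Fin.last m) * exp (-(2 * z (Fin.last m)))
      = ∑ j, monoA m z x j.castSucc * monoB m g z x j
        + 2 * monoA m z x (Fin.last m) * monoC m g z x := by
  simp only [monoA_castSucc_mul_monoB, mul_assoc, monoA_last_mul_monoC]

theorem D_potential_eq :
    (∑ j : Fin m, g j.castSucc * exp (x j.succ - x j.castSucc))
        + (if _h : 0 < m then
            g ⟨m - 1, Nat.sub_lt_succ m 1⟩ * g (Fin.last m)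
              * exp (-x (Fin.last m) - x ⟨m - 1, Nat.sub_lt_succ m 1⟩)
          else 0)
      = ∑ j, monoA m z x j.succ * monoB m g z x j
        + (Fin.cons 0 (monoB m g z x) : Fin (m + 1) → ℝ) (Fin.last m) * monoC m g z x := by
  simp only [monoA_succ_mul_monoB, add_right_inj]
  cases m with
  | zero => simp
  | succ k =>
    rw [dif_pos k.succ_pos, ← Fin.succ_last, Fin.cons_succ,
      monoB_mul_monoC z x (Fin.succ_last k)]
    rfl

end Qker

/-- The kernel `Q` intertwines the quadratic Hamiltonians of the `C_n` and
`D_n` open Toda chains, `n = m + 1 ≥ 1` (for `n = 1` the term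
`g_{n−1} g_n e^{−x_n − x_{n−1}}` is absent). -/
theorem C_D_intertwining (m : ℕ) (g : Fin (m + 1) → ℝ)
    (z x : Fin (m + 1) → ℝ) :
    -(1/2) * (∑ i : Fin (m + 1), pd2 (fun u => Qker m g u x) i z)
      + ((∑ i : Fin m, g i.castSucc * Real.exp (z i.succ - z i.castSucc))
          + 2 * g (Fin.last m) * Real.exp (-(2 * z (Fin.last m)))) * Qker m g z x
    = -(1/2) * (∑ i : Fin (m + 1), pd2 (fun v => Qker m g z v) i x)
      + ((∑ i : Fin m, g i.castSucc * Real.exp (x i.succ - x i.castSucc))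
          + (if h : 0 < m then
              g ⟨m - 1, by omega⟩ * g (Fin.last m)
                * Real.exp (-x (Fin.last m) - x ⟨m - 1, by omega⟩) else 0)) * Qker m g z x := by
  have key := Fin.sum_sq_add_cons_sub_sum_sq_add_snoc
    (Qker.monoA m z x) (Qker.monoB m g z x) (Qker.monoC m g z x)
  simp only [Qker.pd2_left_eq, Qker.pd2_right_eq, ← Finset.sum_mul]
  rw [Qker.C_potential_eq z x, Qker.D_potential_eq z x]
  linear_combination (-(1 / 2) * Qker m g z x) * key
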